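/- Let r be a positive odd integer and n ≥ 2. If W ⊆ 2^{[n]} is a weakly r-separated collection, then the collection W⁻ := {A ⊆ [n−1] : A ∈ W or A∪{n} ∈ W} is a weakly r-separated collection of subsets of [n−1]. -/

import Mathlib

open Finset

/-- An alternating sequence for the pair of sets `A`, `B`: a strictly increasing
sequence whose odd-position elements lie in one of `A \ B`, `B \ A` and whose
even-position elements lie in the other. -/
def IsAltSeq (A B : Finset ℕ) {m : ℕ} (f : Fin m → ℕ) : Prop :=
  StrictMono f ∧
    ((∀ j : Fin m, (j : ℕ) % 2 = 0 → f j ∈ A \ B) ∧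
        (∀ j : Fin m, (j : ℕ) % 2 = 1 → f j ∈ B \ A) ∨
      (∀ j : Fin m, (j : ℕ) % 2 = 0 → f j ∈ B \ A) ∧
        (∀ j : Fin m, (j : ℕ) % 2 = 1 → f j ∈ A \ B))

/-- `altLen A B` is the maximum length of an alternating sequence for `A`, `B`. -/
noncomputable def altLen (A B : Finset ℕ) : ℕ :=
  sSup {m : ℕ | ∃ f : Fin m → ℕ, IsAltSeq A B f}

/-- `A` surrounds `B`:  `min (A \ B) < min (B \ A)` and `max (B \ A) < max (A \ B)`. -/
def Surrounds (A B : Finset ℕ) : Prop :=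
  (A \ B).min < (B \ A).min ∧ (B \ A).max < (A \ B).max

/-- Weak `r`-separation for an odd `r`. -/
def WeaklySep (r : ℕ) (A B : Finset ℕ) : Prop :=
  altLen A B ≤ r + 2 ∧
    (altLen A B = r + 2 →
      Surrounds A B ∧ A.card ≤ B.card ∨ Surrounds B A ∧ B.card ≤ A.card)

/-!
If `A` and `B` avoid `n` and `A`, `B ∪ {n}` are weakly `r`-separated, then `alt(A, B)` can only
reach `r + 2` if `alt(A, B ∪ {n}) = r + 2` as well, and then, `n` being the last element of
`(B ∪ {n}) \ A`, the set `B ∪ {n}` must surround `A` and be no larger than it. A longest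
alternating sequence for `A`, `B` has odd length `r + 2`; it cannot begin in `A \ B`, since it
would then also end there and could be extended by `n`. So it begins and ends in `B \ A`, and by
maximality no element of `A \ B` lies before its first or after its last term: `B` surrounds `A`.
The remaining cases are immediate: weak separation only depends on `A \ B` and `B \ A`, which do
not change when `n` is added to both sets.
-/

def IsAltSeqFrom (X Y : Finset ℕ) {m : ℕ} (f : Fin m → ℕ) : Prop :=
  StrictMono f ∧ ∀ j : Fin m, ((j : ℕ) % 2 = 0 → f j ∈ X \ Y) ∧ ((j : ℕ) % 2 = 1 → f j ∈ Y \ X)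

section AltSeq

variable {A B X Y X' Y' : Finset ℕ} {m : ℕ} {f : Fin m → ℕ}

lemma isAltSeq_iff : IsAltSeq A B f ↔ IsAltSeqFrom A B f ∨ IsAltSeqFrom B A f := by
  simp only [IsAltSeq, IsAltSeqFrom, forall_and, and_or_left]

lemma IsAltSeqFrom.mono (h : IsAltSeqFrom X Y f) (hX : X \ Y ⊆ X' \ Y') (hY : Y \ X ⊆ Y' \ X') :
    IsAltSeqFrom X' Y' f :=
  ⟨h.1, fun j => ⟨fun hj => hX ((h.2 j).1 hj), fun hj => hY ((h.2 j).2 hj)⟩⟩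

lemma IsAltSeqFrom.mem_union (h : IsAltSeqFrom X Y f) (j : Fin m) : f j ∈ X ∪ Y := by
  rcases Nat.mod_two_eq_zero_or_one j with hj | hj
  · exact mem_union_left _ (mem_sdiff.1 ((h.2 j).1 hj)).1
  · exact mem_union_right _ (mem_sdiff.1 ((h.2 j).2 hj)).1

lemma IsAltSeq.mem_union (h : IsAltSeq A B f) (j : Fin m) : f j ∈ A ∪ B := by
  rcases isAltSeq_iff.1 h with h | h
  · exact h.mem_union j
  · exact union_comm B A ▸ h.mem_union j

lemma bddAbove_altSeq_lengths (A B : Finset ℕ) :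
    BddAbove {m : ℕ | ∃ f : Fin m → ℕ, IsAltSeq A B f} := by
  refine ⟨#(A ∪ B), ?_⟩
  rintro m ⟨f, hf⟩
  simpa using card_le_card_of_injOn (s := univ) f (fun j _ => hf.mem_union j) hf.1.injective.injOn

lemma IsAltSeq.le_altLen (h : IsAltSeq A B f) : m ≤ altLen A B :=
  le_csSup (bddAbove_altSeq_lengths A B) ⟨f, h⟩

lemma exists_isAltSeq_altLen (A B : Finset ℕ) :
    ∃ f : Fin (altLen A B) → ℕ, IsAltSeq A B f := by
  have hempty : IsAltSeq A B (Fin.elim0 : Fin 0 → ℕ) :=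
    ⟨fun i => i.elim0, .inl ⟨fun j => j.elim0, fun j => j.elim0⟩⟩
  exact Nat.sSup_mem ⟨0, show ∃ f : Fin 0 → ℕ, IsAltSeq A B f from ⟨_, hempty⟩⟩
    (bddAbove_altSeq_lengths A B)

lemma altLen_mono (hA : A \ B ⊆ X \ Y) (hB : B \ A ⊆ Y \ X) : altLen A B ≤ altLen X Y := by
  obtain ⟨f, hf⟩ := exists_isAltSeq_altLen A B
  refine IsAltSeq.le_altLen (f := f) (isAltSeq_iff.2 ?_)
  exact (isAltSeq_iff.1 hf).imp (·.mono hA hB) (·.mono hB hA)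

lemma altLen_comm (A B : Finset ℕ) : altLen A B = altLen B A := by
  simp only [altLen, isAltSeq_iff, or_comm]

lemma strictMono_finSnoc {α : Type*} [Preorder α] {f : Fin m → α} {a : α} (hf : StrictMono f)
    (ha : ∀ j, f j < a) : StrictMono (Fin.snoc f a : Fin (m + 1) → α) := by
  intro i j hij
  induction j using Fin.lastCases with
  | last =>
    induction i using Fin.lastCases with
    | last => exact absurd hij (lt_irrefl _)
    | cast i => simpa using ha i
  | cast j =>
    induction i using Fin.lastCases with
    | last => exact absurd hij (not_lt.2 (Fin.le_last _))
    | cast i => simpa using hf (Fin.castSucc_lt_castSucc_iff.1 hij)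

lemma IsAltSeqFrom.cons (hf : IsAltSeqFrom X Y f) {a : ℕ} (ha : ∀ j, a < f j) (haY : a ∈ Y \ X) :
    IsAltSeqFrom Y X (Fin.cons a f : Fin (m + 1) → ℕ) := by
  refine ⟨Fin.strictMono_cons.2 ⟨ha, hf.1⟩, fun j => ?_⟩
  induction j using Fin.cases with
  | zero => exact ⟨fun _ => haY, fun h => absurd h (by simp)⟩
  | succ j =>
    simp only [Fin.cons_succ, Fin.val_succ]
    exact ⟨fun h => (hf.2 j).2 (by omega), fun h => (hf.2 j).1 (by omega)⟩

/-- An alternating sequence of odd length ends on the side it starts from. -/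
lemma IsAltSeqFrom.snoc (hf : IsAltSeqFrom X Y f) (hm : Odd m) {a : ℕ} (ha : ∀ j, f j < a)
    (haY : a ∈ Y \ X) : IsAltSeqFrom X Y (Fin.snoc f a : Fin (m + 1) → ℕ) := by
  refine ⟨strictMono_finSnoc hf.1 ha, fun j => ?_⟩
  induction j using Fin.lastCases with
  | last =>
    simp only [Fin.snoc_last, Fin.val_last, Nat.odd_iff.1 hm]
    exact ⟨fun h => absurd h (by simp), fun _ => haY⟩
  | cast j => simpa using hf.2 j

end AltSeq

lemma Finset.coe_lt_min {α : Type*} [LinearOrder α] {s : Finset α} {b : α}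
    (h : ∀ a ∈ s, b < a) : (b : WithTop α) < s.min := by
  rcases s.eq_empty_or_nonempty with rfl | hs
  · simp
  · rw [← coe_min' hs]
    exact WithTop.coe_lt_coe.2 (h _ (min'_mem s hs))

lemma Finset.max_lt_coe {α : Type*} [LinearOrder α] {s : Finset α} {b : α}
    (h : ∀ a ∈ s, a < b) : s.max < (b : WithBot α) := by
  rcases s.eq_empty_or_nonempty with rfl | hs
  · simp
  · rw [← coe_max' hs]
    exact WithBot.coe_lt_coe.2 (h _ (max'_mem s hs))

section Surrounds

variable {A B X Y : Finset ℕ} {n : ℕ}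

lemma surrounds_of_isAltSeqFrom {m : ℕ} {f : Fin m → ℕ} (hf : IsAltSeqFrom Y X f) (hm : Odd m)
    (hmax : altLen X Y ≤ m) : Surrounds Y X := by
  obtain ⟨k, rfl⟩ := hm
  have hfirst : f 0 ∈ Y \ X := (hf.2 0).1 rfl
  have hlast : f (Fin.last (2 * k)) ∈ Y \ X := (hf.2 _).1 (by simp)
  have hne {a} (ha : a ∈ X \ Y) {b} (hb : b ∈ Y \ X) : a ≠ b := by
    rintro rfl
    exact (mem_sdiff.1 ha).2 (mem_sdiff.1 hb).1
  have hafter : ∀ a ∈ X \ Y, f 0 < a := by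
    intro a ha
    by_contra! hle
    have hlt : ∀ j, a < f j := fun j =>
      (lt_of_le_of_ne hle (hne ha hfirst)).trans_le (hf.1.monotone (Fin.zero_le j))
    have := (isAltSeq_iff.2 (.inl (hf.cons hlt ha))).le_altLen
    omega
  have hbefore : ∀ a ∈ X \ Y, a < f (Fin.last (2 * k)) := by
    intro a ha
    by_contra! hle
    have hlt : ∀ j, f j < a := fun j =>
      (hf.1.monotone (Fin.le_last j)).trans_lt (lt_of_le_of_ne hle (hne ha hlast).symm)
    have := (isAltSeq_iff.2 (.inl (hf.snoc ⟨k, rfl⟩ hlt ha))).le_altLen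
    rw [altLen_comm] at this
    omega
  exact ⟨(min_le hfirst).trans_lt (coe_lt_min hafter),
    (max_lt_coe hbefore).trans_le (le_max hlast)⟩

lemma surrounds_of_altLen_insert_le (hA : ∀ x ∈ A, x < n) (hB : ∀ x ∈ B, x < n)
    (hodd : Odd (altLen A B)) (hle : altLen A (insert n B) ≤ altLen A B) : Surrounds B A := by
  have hnA : n ∉ A := fun h => lt_irrefl n (hA n h)
  obtain ⟨f, hf⟩ := exists_isAltSeq_altLen A B
  rcases isAltSeq_iff.1 hf with hAB | hBA
  · have hlt : ∀ j, f j < n := fun j => by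
      rcases mem_union.1 (hf.mem_union j) with h | h
      exacts [hA _ h, hB _ h]
    have hext := (hAB.mono (sdiff_insert_of_notMem hnA B).symm.subset
      (sdiff_subset_sdiff (subset_insert n B) subset_rfl)).snoc hodd hlt
      (mem_sdiff.2 ⟨mem_insert_self n B, hnA⟩)
    have := (isAltSeq_iff.2 (.inl hext)).le_altLen
    omega
  · exact surrounds_of_isAltSeqFrom hBA hodd le_rfl

lemma not_surrounds_insert (hA : ∀ x ∈ A, x < n) : ¬ Surrounds A (insert n B) := by
  rintro ⟨-, hmax⟩
  have hn : ((n : ℕ) : WithBot ℕ) ≤ (insert n B \ A).max :=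
    le_max (mem_sdiff.2 ⟨mem_insert_self n B, fun h => lt_irrefl n (hA n h)⟩)
  have hA' : (A \ insert n B).max < n := max_lt_coe fun x hx => hA x (mem_sdiff.1 hx).1
  exact lt_irrefl _ (hA'.trans_le (hn.trans hmax.le))

end Surrounds

section WeaklySep

variable {r n : ℕ} {A B : Finset ℕ}

lemma WeaklySep.symm (h : WeaklySep r A B) : WeaklySep r B A := by
  rw [WeaklySep, altLen_comm B A]
  exact ⟨h.1, fun he => (h.2 he).symm⟩

lemma weaklySep_sdiff_iff : WeaklySep r (A \ B) (B \ A) ↔ WeaklySep r A B := by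
  have hA : (A \ B) \ (B \ A) = A \ B := disjoint_sdiff_sdiff.sdiff_eq_left
  have hB : (B \ A) \ (A \ B) = B \ A := disjoint_sdiff_sdiff.symm.sdiff_eq_left
  have hlen : altLen (A \ B) (B \ A) = altLen A B :=
    le_antisymm (altLen_mono hA.subset hB.subset) (altLen_mono hA.symm.subset hB.symm.subset)
  simp only [WeaklySep, Surrounds, hlen, hA, hB, card_sdiff_le_card_sdiff_iff]

lemma WeaklySep.of_insert_insert (hnA : n ∉ A) (hnB : n ∉ B)
    (h : WeaklySep r (insert n A) (insert n B)) : WeaklySep r A B := by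
  rwa [← weaklySep_sdiff_iff, insert_sdiff_insert, insert_sdiff_insert,
    sdiff_insert_of_notMem hnA, sdiff_insert_of_notMem hnB, weaklySep_sdiff_iff] at h

lemma WeaklySep.of_insert_right (hr : Odd r) (hA : ∀ x ∈ A, x < n) (hB : ∀ x ∈ B, x < n)
    (h : WeaklySep r A (insert n B)) : WeaklySep r A B := by
  have hnA : n ∉ A := fun h => lt_irrefl n (hA n h)
  have hnB : n ∉ B := fun h => lt_irrefl n (hB n h)
  have hmono : altLen A B ≤ altLen A (insert n B) :=
    altLen_mono (sdiff_insert_of_notMem hnA B).symm.subset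
      (sdiff_subset_sdiff (subset_insert n B) subset_rfl)
  refine ⟨hmono.trans h.1, fun heq => .inr ?_⟩
  have heq' : altLen A (insert n B) = r + 2 := le_antisymm h.1 (heq ▸ hmono)
  rcases h.2 heq' with ⟨hsur, -⟩ | ⟨-, hcard⟩
  · exact absurd hsur (not_surrounds_insert hA)
  · refine ⟨surrounds_of_altLen_insert_le hA hB ?_ (heq ▸ h.1), ?_⟩
    · rw [heq]
      exact hr.add_even even_two
    · rw [card_insert_of_notMem hnB] at hcard
      omega

end WeaklySep

theorem weaklySep_deletion_general (r n : ℕ) (hr : Odd r)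
    (W : Finset (Finset ℕ))
    (hWsep : ∀ A ∈ W, ∀ B ∈ W, WeaklySep r A B) :
    ∀ A B : Finset ℕ,
      A ⊆ Finset.Icc 1 (n - 1) → (A ∈ W ∨ insert n A ∈ W) →
      B ⊆ Finset.Icc 1 (n - 1) → (B ∈ W ∨ insert n B ∈ W) →
      WeaklySep r A B := by
  intro A B hA hAW hB hBW
  have lt_of_subset {C : Finset ℕ} (hC : C ⊆ Icc 1 (n - 1)) : ∀ x ∈ C, x < n := fun x hx => by
    have := mem_Icc.1 (hC hx)
    omega
  have hA' := lt_of_subset hA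
  have hB' := lt_of_subset hB
  rcases hAW with hAW | hAW <;> rcases hBW with hBW | hBW
  · exact hWsep A hAW B hBW
  · exact (hWsep A hAW _ hBW).of_insert_right hr hA' hB'
  · exact ((hWsep B hBW _ hAW).of_insert_right hr hB' hA').symm
  · exact (hWsep _ hAW _ hBW).of_insert_insert (fun h => lt_irrefl n (hA' n h))
      (fun h => lt_irrefl n (hB' n h))

/-- the collection W⁻ = {A ⊆ [n-1] : A ∈ W or A ∪ {n} ∈ W}
is weakly r-separated whenever W is. -/
theorem weaklySep_deletion (r n : ℕ) (hr : Odd r) (hn : 2 ≤ n)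
    (W : Finset (Finset ℕ)) (hWsub : ∀ A ∈ W, A ⊆ Finset.Icc 1 n)
    (hWsep : ∀ A ∈ W, ∀ B ∈ W, WeaklySep r A B) :
    ∀ A B : Finset ℕ,
      A ⊆ Finset.Icc 1 (n - 1) → (A ∈ W ∨ insert n A ∈ W) →
      B ⊆ Finset.Icc 1 (n - 1) → (B ∈ W ∨ insert n B ∈ W) →
      WeaklySep r A B :=
  weaklySep_deletion_general r n hr W hWsep
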